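/- arXiv:math/0506579 — 3 statements merged into one kernel-verified Lean document; each statement's English description precedes it below -/
import Mathlib

section
/- Let q be a finite-dimensional Lie algebra over a field of characteristic zero and ξ ∈ q*. Set h = q_ξ and U = (q*)^h. Assume q·ξ + U = q*. Then dim U = dim z_q(h). -/
/-- The coadjoint action of `x : L` on the dual space: `(coad k x f) y = - f ⁅x, y⁆`. -/
noncomputable def coad (k : Type*) {L : Type*} [Field k] [LieRing L] [LieAlgebra k L]
    (x : L) : Module.Dual k L →ₗ[k] Module.Dual k L where
  toFun f := -(f ∘ₗ (LieAlgebra.ad k L x : L →ₗ[k] L))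
  map_add' f g := by ext y; simp [add_comm]
  map_smul' c f := by ext y; simp

/-- For `ξ` in the dual space, the linear map `z ↦ z · ξ` (coadjoint action on `ξ`);
its range is the tangent space `q·ξ` of the coadjoint orbit and its kernel is the
stabiliser `q_ξ`. -/
noncomputable def coadOrbitMap (k : Type*) {L : Type*} [Field k] [LieRing L] [LieAlgebra k L]
    (ξ : Module.Dual k L) : L →ₗ[k] Module.Dual k L where
  toFun z := coad k z ξ
  map_add' z w := by ext y; simp [coad, add_comm]
  map_smul' c z := by ext y; simp [coad]

/-! For `z` in the stabiliser `h = q_ξ`, the coadjoint action gives `z · (x · ξ) = ⁅z, x⁆ · ξ`,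
so `x · ξ ∈ U` exactly when `x` normalises `h`. Genericity upgrades "normalises" to
"centralises": if `z ∈ h` and `⁅z, x⁆ ∈ h`, then `⁅z, x⁆` is killed both by `q · ξ`
(as `ξ ⁅y, w⁆ = 0` for `w ∈ h`) and by `U`, hence by all of `q* = q · ξ + U`.
Thus `z_q(h)` is the preimage of `U` under `x ↦ x · ξ`, whose kernel is `h`; since
`q · ξ + U = q*` and `dim q* = dim q`, a dimension count gives `dim z_q(h) = dim U`. -/

open Module

section LinearAlgebra

variable {K V W : Type*} [DivisionRing K] [AddCommGroup V] [Module K V] [AddCommGroup W]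
  [Module K W] [FiniteDimensional K V] [FiniteDimensional K W]

theorem Submodule.finrank_comap_add_finrank_eq_of_range_sup_eq_top (A : V →ₗ[K] W)
    (U : Submodule K W) (h : LinearMap.range A ⊔ U = ⊤) :
    finrank K (U.comap A) + finrank K W = finrank K U + finrank K V := by
  have hsurj : LinearMap.range (U.mkQ ∘ₗ A) = ⊤ := by
    rw [LinearMap.range_comp, Submodule.map_mkQ_eq_top, sup_comm, h]
  have hker : LinearMap.ker (U.mkQ ∘ₗ A) = U.comap A := by
    rw [LinearMap.ker_comp, Submodule.ker_mkQ]
  have hrank := LinearMap.finrank_range_add_finrank_ker (U.mkQ ∘ₗ A)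
  rw [hsurj, hker, finrank_top] at hrank
  rw [← hrank, ← U.finrank_quotient_add_finrank]
  ring

end LinearAlgebra

section Coadjoint

variable {k L : Type*} [Field k] [LieRing L] [LieAlgebra k L]

theorem coad_apply (x : L) (f : Dual k L) (y : L) : coad k x f y = -f ⁅x, y⁆ := rfl

theorem coadOrbitMap_apply (ξ : Dual k L) (x : L) : coadOrbitMap k ξ x = coad k x ξ := rfl

theorem coad_lie (x y : L) : coad k ⁅x, y⁆ = coad k x * coad k y - coad k y * coad k x := by
  ext f w
  simp only [coad_apply, Module.End.mul_apply, LinearMap.sub_apply, lie_lie, map_sub]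
  ring

theorem coad_apply_apply_swap (ξ : Dual k L) (x y : L) : coad k x ξ y = -coad k y ξ x := by
  simp only [coad_apply, ← lie_skew y x, map_neg, neg_neg]

theorem coad_coad_of_coad_eq_zero {ξ : Dual k L} {z : L} (hz : coad k z ξ = 0) (x : L) :
    coad k z (coad k x ξ) = coad k ⁅z, x⁆ ξ := by
  simp only [coad_lie, LinearMap.sub_apply, Module.End.mul_apply, hz, map_zero, sub_zero]

variable (k) in
def coadStabilizer (ξ : Dual k L) : Set L := {z | coad k z ξ = 0}

variable (k) in
noncomputable def dualInvariants (s : Set L) : Submodule k (Dual k L) :=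
  ⨅ z ∈ s, LinearMap.ker (coad k z)

variable (k) in
noncomputable def lieCentralizer (s : Set L) : Submodule k L :=
  ⨅ z ∈ s, LinearMap.ker (LieAlgebra.ad k L z)

theorem mem_dualInvariants {s : Set L} {f : Dual k L} :
    f ∈ dualInvariants k s ↔ ∀ z ∈ s, coad k z f = 0 := by
  simp [dualInvariants]

theorem mem_lieCentralizer {s : Set L} {x : L} :
    x ∈ lieCentralizer k s ↔ ∀ z ∈ s, ⁅z, x⁆ = 0 := by
  simp [lieCentralizer]

theorem apply_lie_eq_zero_of_mem_dualInvariants {s : Set L} {f : Dual k L}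
    (hf : f ∈ dualInvariants k s) {z : L} (hz : z ∈ s) (x : L) : f ⁅z, x⁆ = 0 := by
  simpa [coad_apply] using congr($(mem_dualInvariants.mp hf z hz) x)

end Coadjoint

section Generic

variable {k L : Type*} [Field k] [LieRing L] [LieAlgebra k L] {ξ : Dual k L}

theorem lie_eq_zero_of_mem_coadStabilizer_of_lie_mem
    (hgen : LinearMap.range (coadOrbitMap k ξ) ⊔ dualInvariants k (coadStabilizer k ξ) = ⊤)
    {z x : L} (hz : z ∈ coadStabilizer k ξ) (hzx : ⁅z, x⁆ ∈ coadStabilizer k ξ) :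
    ⁅z, x⁆ = 0 := by
  rw [← forall_dual_apply_eq_zero_iff k]
  intro f
  obtain ⟨_, ⟨y, rfl⟩, u, hu, rfl⟩ := Submodule.mem_sup.mp (hgen ▸ Submodule.mem_top : f ∈ _)
  rw [LinearMap.add_apply, coadOrbitMap_apply, coad_apply_apply_swap, (hzx : coad k ⁅z, x⁆ ξ = 0),
    apply_lie_eq_zero_of_mem_dualInvariants hu hz]
  simp

theorem lieCentralizer_coadStabilizer_eq_comap
    (hgen : LinearMap.range (coadOrbitMap k ξ) ⊔ dualInvariants k (coadStabilizer k ξ) = ⊤) :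
    lieCentralizer k (coadStabilizer k ξ) =
      (dualInvariants k (coadStabilizer k ξ)).comap (coadOrbitMap k ξ) := by
  ext x
  simp only [Submodule.mem_comap, mem_lieCentralizer, mem_dualInvariants]
  refine forall₂_congr fun z hz => ?_
  rw [coadOrbitMap_apply, coad_coad_of_coad_eq_zero hz, ← coadOrbitMap_apply]
  exact ⟨fun h => by rw [h, map_zero], lie_eq_zero_of_mem_coadStabilizer_of_lie_mem hgen hz⟩

theorem finrank_dualInvariants_eq_finrank_lieCentralizer [FiniteDimensional k L]
    (hgen : LinearMap.range (coadOrbitMap k ξ) ⊔ dualInvariants k (coadStabilizer k ξ) = ⊤) :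
    finrank k (dualInvariants k (coadStabilizer k ξ)) =
      finrank k (lieCentralizer k (coadStabilizer k ξ)) := by
  have hdim := Submodule.finrank_comap_add_finrank_eq_of_range_sup_eq_top _ _ hgen
  rw [Subspace.dual_finrank_eq, ← lieCentralizer_coadStabilizer_eq_comap hgen] at hdim
  omega

end Generic

theorem dim_fixed_space_eq_dim_centralizer_general
    {k L : Type*} [Field k] [LieRing L] [LieAlgebra k L]
    [FiniteDimensional k L] (ξ : Module.Dual k L)
    (hgen : LinearMap.range (coadOrbitMap k ξ) ⊔
        (⨅ z ∈ {z : L | coad k z ξ = 0}, LinearMap.ker (coad k z)) = ⊤) :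
    Module.finrank k ↥(⨅ z ∈ {z : L | coad k z ξ = 0}, LinearMap.ker (coad k z)) =
      Module.finrank k ↥(⨅ z ∈ {z : L | coad k z ξ = 0},
        LinearMap.ker (LieAlgebra.ad k L z)) :=
  finrank_dualInvariants_eq_finrank_lieCentralizer hgen

/-- Let `q` be a finite-dimensional Lie algebra over a field of
characteristic zero, `ξ ∈ q*`, `h = q_ξ` and `U = (q*)^h`. If `q·ξ + U = q*`
then `dim U = dim z_q(h)`. -/
theorem dim_fixed_space_eq_dim_centralizer
    {k L : Type*} [Field k] [CharZero k] [LieRing L] [LieAlgebra k L]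
    [FiniteDimensional k L] (ξ : Module.Dual k L)
    (hgen : LinearMap.range (coadOrbitMap k ξ) ⊔
        (⨅ z ∈ {z : L | coad k z ξ = 0}, LinearMap.ker (coad k z)) = ⊤) :
    Module.finrank k ↥(⨅ z ∈ {z : L | coad k z ξ = 0}, LinearMap.ker (coad k z)) =
      Module.finrank k ↥(⨅ z ∈ {z : L | coad k z ξ = 0},
        LinearMap.ker (LieAlgebra.ad k L z)) :=
  dim_fixed_space_eq_dim_centralizer_general ξ hgen
end

section
/- Let q be a finite-dimensional Lie algebra over a field of characteristic zero and ξ ∈ q*. Set h = q_ξ and U = (q*)^h. Assume q·ξ + U = q* and that h is near-toral, i.e. [q,h] ∩ z_q(h) = {0}. Then q = [q,h] ⊕ z_q(h) (direct sum of subspaces), and the restriction map U → (z_q(h))*, f ↦ f|_{z_q(h)}, is a linear isomorphism. -/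
section AuxNT

variable {k L : Type*} [Field k] [LieRing L] [LieAlgebra k L]

theorem coad_apply_nt (x : L) (f : Module.Dual k L) (y : L) :
    coad k x f y = -f ⁅x, y⁆ := by
  simp [coad]

theorem coad_eq_zero_iff_nt (x : L) (f : Module.Dual k L) :
    coad k x f = 0 ↔ ∀ y, f ⁅x, y⁆ = 0 := by
  constructor
  · intro h y
    have := DFunLike.congr_fun h y
    simpa [coad_apply_nt] using this
  · intro h
    ext y
    simp [coad_apply_nt, h y]

end AuxNT

/-- Let `q` be a finite-dimensional Lie algebra over a field of
characteristic zero, `ξ ∈ q*`, `h = q_ξ` and `U = (q*)^h`. Assume `q·ξ + U = q*`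
(genericity) and that `h` is near-toral, i.e. `[q,h] ∩ z_q(h) = {0}`. Then
`q = [q,h] ⊕ z_q(h)`, and the restriction map `U → (z_q(h))*`, `f ↦ f|_{z_q(h)}`,
is a linear isomorphism. -/
theorem near_toral_decomposition_and_restriction_iso
    {k L : Type*} [Field k] [CharZero k] [LieRing L] [LieAlgebra k L]
    [FiniteDimensional k L] (ξ : Module.Dual k L)
    (hgen : LinearMap.range (coadOrbitMap k ξ) ⊔
        (⨅ z ∈ {z : L | coad k z ξ = 0}, LinearMap.ker (coad k z)) = ⊤)
    (hnear : Submodule.span k {w : L | ∃ y z : L, coad k z ξ = 0 ∧ ⁅y, z⁆ = w} ⊓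
        (⨅ z ∈ {z : L | coad k z ξ = 0}, LinearMap.ker (LieAlgebra.ad k L z)) = ⊥) :
    (Submodule.span k {w : L | ∃ y z : L, coad k z ξ = 0 ∧ ⁅y, z⁆ = w} ⊔
        (⨅ z ∈ {z : L | coad k z ξ = 0}, LinearMap.ker (LieAlgebra.ad k L z)) = ⊤ ∧
      Submodule.span k {w : L | ∃ y z : L, coad k z ξ = 0 ∧ ⁅y, z⁆ = w} ⊓
        (⨅ z ∈ {z : L | coad k z ξ = 0}, LinearMap.ker (LieAlgebra.ad k L z)) = ⊥) ∧
    Function.Bijective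
      (((⨅ z ∈ {z : L | coad k z ξ = 0},
          LinearMap.ker (LieAlgebra.ad k L z)).subtype.dualMap).comp
        (⨅ z ∈ {z : L | coad k z ξ = 0}, LinearMap.ker (coad k z)).subtype) := by
  classical
  set S : Set L := {z : L | coad k z ξ = 0} with hS
  set W : Submodule k L := Submodule.span k {w : L | ∃ y z : L, coad k z ξ = 0 ∧ ⁅y, z⁆ = w}
    with hWdef
  set Z : Submodule k L := ⨅ z ∈ S, LinearMap.ker (LieAlgebra.ad k L z) with hZdef
  set U : Submodule k (Module.Dual k L) := ⨅ z ∈ S, LinearMap.ker (coad k z) with hUdef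
  -- membership lemmas
  have hZmem : ∀ m : L, m ∈ Z ↔ ∀ z ∈ S, ⁅z, m⁆ = 0 := by
    intro m
    simp [hZdef, Submodule.mem_iInf, LieAlgebra.ad_apply]
  have hUmem : ∀ f : Module.Dual k L, f ∈ U ↔ ∀ z ∈ S, ∀ y, f ⁅z, y⁆ = 0 := by
    intro f
    simp [hUdef, Submodule.mem_iInf, coad_eq_zero_iff_nt]
  have hWgen : ∀ y z : L, z ∈ S → ⁅y, z⁆ ∈ W := by
    intro y z hz
    exact Submodule.subset_span ⟨y, z, hz, rfl⟩
  have hWgen' : ∀ z y : L, z ∈ S → ⁅z, y⁆ ∈ W := by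
    intro z y hz
    rw [← lie_skew]
    exact W.neg_mem (hWgen y z hz)
  -- the stabiliser is a Lie subalgebra
  have hlie_mem : ∀ {x y : L}, coad k x ξ = 0 → coad k y ξ = 0 → coad k ⁅x, y⁆ ξ = 0 := by
    intro x y hx hy
    rw [coad_eq_zero_iff_nt] at hx hy ⊢
    intro w
    rw [lie_lie, map_sub, hx, hy, sub_zero]
  -- S is closed under the coadjoint relation; abelian-ness of the stabiliser
  have habel : ∀ z ∈ S, ∀ w ∈ S, ⁅z, w⁆ = 0 := by
    intro z hz w hw
    rw [← Module.forall_dual_apply_eq_zero_iff k]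
    intro f
    have hf : f ∈ LinearMap.range (coadOrbitMap k ξ) ⊔ U := by
      rw [hgen]; exact Submodule.mem_top
    obtain ⟨g, hg, u, hu, rfl⟩ := Submodule.mem_sup.mp hf
    obtain ⟨a, rfl⟩ := hg
    have hzw : coad k ⁅z, w⁆ ξ = 0 := hlie_mem hz hw
    have h1 : coadOrbitMap k ξ a ⁅z, w⁆ = 0 := by
      show coad k a ξ ⁅z, w⁆ = 0
      rw [coad_apply_nt, neg_eq_zero, ← lie_skew, map_neg, neg_eq_zero]
      exact (coad_eq_zero_iff_nt _ _).mp hzw a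
    have h2 : u ⁅z, w⁆ = 0 := (hUmem u).mp hu z hz w
    simp [h1, h2]
  -- the stabiliser as a Lie subalgebra
  let H : LieSubalgebra k L :=
    { LinearMap.ker (coadOrbitMap k ξ) with
      lie_mem' := fun hx hy => hlie_mem hx hy }
  have hHmem : ∀ z : L, z ∈ H ↔ z ∈ S := fun z => ⟨fun h => h, fun h => h⟩
  haveI : IsLieAbelian H := by
    constructor
    intro x y
    apply Subtype.ext
    show ⁅(x : L), (y : L)⁆ = 0
    exact habel _ ((hHmem _).mp x.2) _ ((hHmem _).mp y.2)
  haveI : LieRing.IsNilpotent H :=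
    (LieModule.isNilpotent_iff k H H).mpr
      ⟨1, (LieModule.trivial_iff_lower_central_eq_bot k (↥H) (↥H)).mp inferInstance⟩
  -- W is an H-submodule of L
  let W' : LieSubmodule k H L :=
    { W with
      lie_mem := by
        intro x m hm
        show ⁅(x : L), m⁆ ∈ W
        refine Submodule.span_induction ?_ ?_ ?_ ?_ hm
        · rintro w ⟨y, z, hz, rfl⟩
          rw [leibniz_lie, habel _ ((hHmem _).mp x.2) z hz, lie_zero, add_zero]
          exact hWgen _ _ hz
        · simp
        · intro a b _ _ ha hb
          rw [lie_add]; exact W.add_mem ha hb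
        · intro c a _ ha
          rw [lie_smul]; exact W.smul_mem c ha }
  -- the zero generalised weight space
  set N : LieSubmodule k H L := LieModule.genWeightSpace L (0 : H → k) with hNdef
  have hZN : Z ≤ (N : Submodule k L) := by
    intro m hm
    rw [LieSubmodule.mem_toSubmodule, LieModule.mem_genWeightSpace]
    intro x
    refine ⟨1, ?_⟩
    simp only [Pi.zero_apply, zero_smul, sub_zero, pow_one]
    show ⁅x, m⁆ = 0
    exact (hZmem m).mp hm (x : L) ((hHmem _).mp x.2)
  -- the positive Fitting component is contained in W
  have hPW : (LieModule.posFittingComp k H L : Submodule k L) ≤ W := by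
    have hle : LieModule.posFittingComp k H L ≤ W' := by
      rw [LieModule.posFittingComp]
      refine iSup_le fun x => ?_
      intro m hm
      obtain ⟨n, hn⟩ := (LieModule.mem_posFittingCompOf k x m).mp hm 1
      rw [pow_one] at hn
      rw [← hn]
      show ⁅(x : L), n⁆ ∈ W
      exact hWgen' _ _ ((hHmem _).mp x.2)
    exact hle
  -- N is contained in Z (Engel-type argument, using near-torality)
  have hNZ : (N : Submodule k L) ≤ Z := by
    have hdisj : Disjoint (LieModule.lowerCentralSeries k (↥H) (↥N) 1)
        (LieModule.maxTrivSubmodule k H N) := by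
      rw [disjoint_iff, LieSubmodule.eq_bot_iff]
      intro m hm
      rw [LieSubmodule.mem_inf] at hm
      obtain ⟨h1, h2⟩ := hm
      have hmW : (m : L) ∈ W := by
        have hmem : (m : L) ∈ N.lcs 1 := by
          rw [← LieSubmodule.lowerCentralSeries_map_eq_lcs]
          exact ⟨m, h1, rfl⟩
        have hle : (N.lcs 1 : Submodule k L) ≤ W := by
          have : N.lcs 1 = ⁅(⊤ : LieIdeal k H), N⁆ := by
            rw [LieSubmodule.lcs_succ, LieSubmodule.lcs_zero]
          rw [this, LieSubmodule.lieIdeal_oper_eq_linear_span]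
          refine Submodule.span_le.mpr ?_
          rintro w ⟨x, n, rfl⟩
          show ⁅((x : H) : L), (n : L)⁆ ∈ W
          exact hWgen' _ _ ((hHmem _).mp (x : H).2)
        exact hle hmem
      have hmZ : (m : L) ∈ Z := by
        rw [hZmem]
        intro z hz
        have h4 := (LieModule.mem_maxTrivSubmodule k H N m).mp h2 ⟨z, (hHmem _).mpr hz⟩
        have h6 : (↑(⁅(⟨z, (hHmem _).mpr hz⟩ : H), m⁆ : N) : L) = 0 := by rw [h4]; rfl
        exact h6
      have hmWZ : (m : L) ∈ W ⊓ Z := ⟨hmW, hmZ⟩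
      rw [hnear, Submodule.mem_bot] at hmWZ
      exact Subtype.ext hmWZ
    haveI htriv : LieModule.IsTrivial H N :=
      (LieModule.disjoint_lowerCentralSeries_maxTrivSubmodule_iff k H N).mp hdisj
    intro m hm
    rw [hZmem]
    intro z hz
    have h4 := htriv.trivial (⟨z, (hHmem _).mpr hz⟩ : H) (⟨m, hm⟩ : N)
    have h6 : (↑(⁅(⟨z, (hHmem _).mpr hz⟩ : H), (⟨m, hm⟩ : N)⁆ : N) : L) = 0 := by rw [h4]; rfl
    exact h6
  -- the decomposition
  have hsup : W ⊔ Z = ⊤ := by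
    have hcod := (LieModule.isCompl_genWeightSpace_zero_posFittingComp k H L).codisjoint
    rw [codisjoint_iff] at hcod
    rw [eq_top_iff]
    intro m _
    have hm : m ∈ N ⊔ LieModule.posFittingComp k H L := by
      rw [hcod]; exact LieSubmodule.mem_top m
    obtain ⟨a, ha, b, hb, rfl⟩ := (LieSubmodule.mem_sup _ _ _).mp hm
    exact Submodule.add_mem _
      (Submodule.mem_sup_right (hNZ ((LieSubmodule.mem_toSubmodule _).mpr ha)))
      (Submodule.mem_sup_left (hPW ((LieSubmodule.mem_toSubmodule _).mpr hb)))
  have hWZcompl : IsCompl W Z := ⟨disjoint_iff.mpr hnear, codisjoint_iff.mpr hsup⟩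
  refine ⟨⟨hsup, hnear⟩, ?_, ?_⟩
  · -- injective
    rw [injective_iff_map_eq_zero]
    intro f hf
    have hfZ : ∀ m ∈ Z, (f : Module.Dual k L) m = 0 := by
      intro m hm
      exact DFunLike.congr_fun hf ⟨m, hm⟩
    have hfW : ∀ m ∈ W, (f : Module.Dual k L) m = 0 := by
      intro m hm
      refine Submodule.span_induction ?_ ?_ ?_ ?_ hm
      · rintro w ⟨y, z, hz, rfl⟩
        rw [← lie_skew, map_neg, (hUmem f).mp f.2 z hz y, neg_zero]
      · simp
      · intro a b _ _ ha hb; rw [map_add, ha, hb, add_zero]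
      · intro c a _ ha; rw [map_smul, ha, smul_zero]
    apply Subtype.ext
    ext y
    have hy : y ∈ W ⊔ Z := by rw [hsup]; exact Submodule.mem_top
    obtain ⟨a, ha, b, hb, rfl⟩ := Submodule.mem_sup.mp hy
    simp [map_add, hfW a ha, hfZ b hb]
  · -- surjective
    intro g
    set f : Module.Dual k L := LinearMap.ofIsCompl hWZcompl 0 g with hfdef
    have hfW : ∀ m ∈ W, f m = 0 := by
      intro m hm
      have := LinearMap.ofIsCompl_left_apply hWZcompl (⟨m, hm⟩ : W) (φ := (0 : W →ₗ[k] k))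
        (ψ := g)
      simpa [hfdef] using this
    have hfU : f ∈ U := by
      rw [hUmem]
      intro z hz y
      exact hfW _ (hWgen' z y hz)
    refine ⟨⟨f, hfU⟩, ?_⟩
    ext m
    have := LinearMap.ofIsCompl_right_apply hWZcompl (φ := (0 : W →ₗ[k] k)) (ψ := g) m
    simp [hfdef] at this ⊢
end

section
/- Let n ≥ 1 and let η be a partition of 2n in which every even part occurs with even multiplicity (an orthogonal partition), with dual partition η̂ = (η̂₁,…,η̂_s), s = η₁. Then 2⌊(s−1)/2⌋ + (1/2)(Σ_{i=1}^{s} η̂ᵢ² − o(η)) − n − 2(n−1) ≥ 0, and equality holds if and only if η has exactly two parts (equivalently η̂₁ = 2). -/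
/-!
Write `r = η̂₁` for the number of parts and `s = η₁`. Expanding
`η̂ᵢ² = (η̂ᵢ - 1)(η̂ᵢ - 2) + 3η̂ᵢ - 2` and using `Σ η̂ᵢ = 2n`, twice the left-hand side becomes
`Σᵢ (η̂ᵢ - 1)(η̂ᵢ - 2) + 2[s odd] - o(η)`, a sum of nonnegative terms plus a parity correction.
If `r = 2`, every `η̂ᵢ` is `1` or `2` and both parts have the parity of `s`, so this vanishes.
Otherwise `r` is even, since `r + 2n = Σⱼ count(j)·(j + 1)` and orthogonality makes every term
even, so `r ≥ 4`; then the term `i = 1` alone gives `(r - 1)(r - 2) - r > 0`.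
-/

/-- The `i`-th entry of the dual partition: `η̂ᵢ = #{j : η_j ≥ i}` (parts counted with
multiplicity). -/
def dualPart {N : ℕ} (η : Nat.Partition N) (i : ℕ) : ℕ :=
  (η.parts.filter (fun j => i ≤ j)).card

/-- The number `o(η)` of odd parts of a partition. -/
def oddCount {N : ℕ} (η : Nat.Partition N) : ℕ :=
  (η.parts.filter (fun j => Odd j)).card

open Finset

lemma sum_Icc_boole_le {s a : ℕ} (ha : a ≤ s) :
    ∑ i ∈ Icc 1 s, (if i ≤ a then 1 else 0) = a := by
  have : {i ∈ Icc 1 s | i ≤ a} = Icc 1 a := by ext; simp only [mem_filter, mem_Icc]; omega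
  rw [sum_boole, Nat.cast_id, this, Nat.card_Icc, Nat.add_sub_cancel]

lemma sum_Icc_card_filter_le (m : Multiset ℕ) {s : ℕ} (hm : ∀ j ∈ m, j ≤ s) :
    ∑ i ∈ Icc 1 s, (m.filter (i ≤ ·)).card = m.sum := by
  induction m using Multiset.induction_on with
  | empty => simp
  | cons a m ih =>
    have hcons (i : ℕ) : ((a ::ₘ m).filter (i ≤ ·)).card
        = (if i ≤ a then 1 else 0) + (m.filter (i ≤ ·)).card := by
      by_cases h : i ≤ a <;> simp [h, add_comm]
    rw [sum_congr rfl fun i _ => hcons i, sum_add_distrib, Multiset.sum_cons,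
      sum_Icc_boole_le (hm a (Multiset.mem_cons_self a m)),
      ih fun j hj => hm j (Multiset.mem_cons_of_mem hj)]

lemma zero_le_sub_one_mul_sub_two (x : ℕ) : (0 : ℚ) ≤ ((x : ℚ) - 1) * (x - 2) := by
  rcases x with _ | _ | x <;> push_cast <;> nlinarith

section Partition

variable {N : ℕ} (η : Nat.Partition N)

lemma one_le_sup_parts (hN : 0 < N) : 1 ≤ η.parts.sup := by
  obtain ⟨j, hj⟩ : ∃ j, j ∈ η.parts := by
    by_contra! h
    have := η.parts_sum
    rw [Multiset.eq_zero_of_forall_notMem h, Multiset.sum_zero] at this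
    omega
  exact (η.parts_pos hj).trans_le (Multiset.le_sup hj)

lemma dualPart_one : dualPart η 1 = Multiset.card η.parts :=
  congrArg _ (Multiset.filter_eq_self.mpr fun _ hj => η.parts_pos hj)

lemma dualPart_le_card (i : ℕ) : dualPart η i ≤ Multiset.card η.parts :=
  Multiset.card_le_card (Multiset.filter_le _ _)

lemma oddCount_le_card : oddCount η ≤ Multiset.card η.parts :=
  Multiset.card_le_card (Multiset.filter_le _ _)

lemma one_le_dualPart {i : ℕ} (hi : i ∈ Icc 1 η.parts.sup) : 1 ≤ dualPart η i := by
  rw [mem_Icc] at hi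
  rw [dualPart, Nat.one_le_iff_ne_zero, Ne, Multiset.card_eq_zero, Multiset.filter_eq_nil]
  intro h
  have : η.parts.sup ≤ i - 1 := Multiset.sup_le.mpr fun j hj => by have := h j hj; omega
  omega

lemma sum_dualPart : ∑ i ∈ Icc 1 η.parts.sup, dualPart η i = N :=
  (sum_Icc_card_filter_le η.parts fun _ => Multiset.le_sup).trans η.parts_sum

lemma even_card_parts_add
    (horth : ∀ j : ℕ, Even j → Even (Multiset.count j η.parts)) :
    Even (Multiset.card η.parts + N) := by
  have : Multiset.card η.parts + N = (η.parts.map (· + 1)).sum := by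
    rw [Multiset.sum_map_add, Multiset.map_id', η.parts_sum, Multiset.map_const',
      Multiset.sum_replicate, smul_eq_mul, mul_one, add_comm]
  rw [this, sum_multiset_map_count]
  refine even_sum _ fun j _ => ?_
  rw [smul_eq_mul]
  rcases Nat.even_or_odd j with hj | hj
  · exact (horth j hj).mul_right _
  · exact hj.add_one.mul_left _

end Partition

lemma oddCount_of_card_eq_two {n : ℕ} (η : Nat.Partition (2 * n))
    (h : Multiset.card η.parts = 2) : oddCount η = 2 * (η.parts.sup % 2) := by
  obtain ⟨a, b, hab⟩ := Multiset.card_eq_two.mp h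
  have hsum : a + b = 2 * n := by simpa [hab] using η.parts_sum
  have hsup : η.parts.sup = max a b := by simp [hab]
  have hodd : oddCount η = (if Odd a then 1 else 0) + (if Odd b then 1 else 0) := by
    by_cases ha : Odd a <;> by_cases hb : Odd b <;>
      simp [oddCount, hab, Multiset.filter_singleton, ha, hb]
  simp only [hodd, hsup, Nat.odd_iff]
  split_ifs <;> omega

def soEvenDefect (n : ℕ) (η : Nat.Partition (2 * n)) : ℚ :=
  2 * (((η.parts.sup - 1) / 2 : ℕ) : ℚ)
    + (1 / 2 : ℚ) * ((∑ i ∈ Icc 1 η.parts.sup, (dualPart η i : ℚ) ^ 2) - (oddCount η : ℚ))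
    - (n : ℚ) - 2 * ((n : ℚ) - 1)

section Defect

variable {n : ℕ} (η : Nat.Partition (2 * n))

lemma two_mul_soEvenDefect (hs : 1 ≤ η.parts.sup) :
    2 * soEvenDefect n η
      = ∑ i ∈ Icc 1 η.parts.sup, ((dualPart η i : ℚ) - 1) * (dualPart η i - 2)
        + 2 * (η.parts.sup % 2 : ℕ) - oddCount η := by
  set s := η.parts.sup
  have hlin : ∑ i ∈ Icc 1 s, (dualPart η i : ℚ) = 2 * n := by exact_mod_cast sum_dualPart η
  have hquad : ∑ i ∈ Icc 1 s, ((dualPart η i : ℚ) - 1) * (dualPart η i - 2)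
      = ∑ i ∈ Icc 1 s, (dualPart η i : ℚ) ^ 2 - 3 * ∑ i ∈ Icc 1 s, (dualPart η i : ℚ) + 2 * s := by
    have hexpand (x : ℚ) : (x - 1) * (x - 2) = x ^ 2 - 3 * x + 2 := by ring
    simp only [hexpand, sum_add_distrib, sum_sub_distrib, ← mul_sum, sum_const, Nat.card_Icc,
      Nat.add_sub_cancel, nsmul_eq_mul]
    ring
  have hfloor : 2 * (((s - 1) / 2 : ℕ) : ℚ) + 2 = s + (s % 2 : ℕ) := by
    exact_mod_cast (by omega : 2 * ((s - 1) / 2) + 2 = s + s % 2)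
  rw [soEvenDefect]
  linarith

lemma soEvenDefect_eq_zero_of_card_eq_two (hs : 1 ≤ η.parts.sup)
    (htwo : Multiset.card η.parts = 2) : soEvenDefect n η = 0 := by
  have hsum : ∑ i ∈ Icc 1 η.parts.sup, ((dualPart η i : ℚ) - 1) * (dualPart η i - 2) = 0 := by
    refine sum_eq_zero fun i hi => ?_
    obtain h | h : dualPart η i = 1 ∨ dualPart η i = 2 := by
      have := one_le_dualPart η hi
      have := dualPart_le_card η i
      omega
    all_goals simp [h]
  have hdefect := two_mul_soEvenDefect η hs
  rw [hsum, oddCount_of_card_eq_two η htwo] at hdefect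
  push_cast at hdefect
  linarith

lemma four_le_card_parts (hs : 1 ≤ η.parts.sup)
    (horth : ∀ j : ℕ, Even j → Even (Multiset.count j η.parts))
    (htwo : Multiset.card η.parts ≠ 2) : 4 ≤ Multiset.card η.parts := by
  have hpos := one_le_dualPart η (mem_Icc.mpr ⟨le_rfl, hs⟩)
  rw [dualPart_one] at hpos
  obtain ⟨k, hk⟩ := even_card_parts_add η horth
  omega

lemma soEvenDefect_pos_of_four_le_card (hs : 1 ≤ η.parts.sup)
    (hfour : 4 ≤ Multiset.card η.parts) : 0 < soEvenDefect n η := by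
  have hfirst : ((Multiset.card η.parts : ℚ) - 1) * (Multiset.card η.parts - 2)
      ≤ ∑ i ∈ Icc 1 η.parts.sup, ((dualPart η i : ℚ) - 1) * (dualPart η i - 2) := by
    rw [← dualPart_one]
    exact single_le_sum (fun i _ => zero_le_sub_one_mul_sub_two _) (mem_Icc.mpr ⟨le_rfl, hs⟩)
  have hodd : (oddCount η : ℚ) ≤ Multiset.card η.parts := by exact_mod_cast oddCount_le_card η
  have hfourq : (4 : ℚ) ≤ Multiset.card η.parts := by exact_mod_cast hfour
  nlinarith [two_mul_soEvenDefect η hs]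

end Defect

/-- the Z₂-grading `(so_{2n}, S²₀)` case. Let `n ≥ 1` and let `η`
be an orthogonal partition of `2n` (every even part occurs with even multiplicity),
with dual partition `η̂ = (η̂₁,…,η̂_s)`, `s = η₁`. Then
`2⌊(s−1)/2⌋ + (1/2)(Σ η̂ᵢ² − o(η)) − n − 2(n−1) ≥ 0`, with equality iff `η` has
exactly two parts (equivalently `η̂₁ = 2`). -/
theorem so_even_inequality (n : ℕ) (hn : 1 ≤ n) (η : Nat.Partition (2 * n))
    (horth : ∀ j : ℕ, Even j → Even (Multiset.count j η.parts)) :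
    (0 ≤ 2 * (((η.parts.sup - 1) / 2 : ℕ) : ℚ)
        + (1 / 2 : ℚ) * ((∑ i ∈ Finset.Icc 1 η.parts.sup, (dualPart η i : ℚ) ^ 2)
            - (oddCount η : ℚ))
        - (n : ℚ) - 2 * ((n : ℚ) - 1)) ∧
    (2 * (((η.parts.sup - 1) / 2 : ℕ) : ℚ)
        + (1 / 2 : ℚ) * ((∑ i ∈ Finset.Icc 1 η.parts.sup, (dualPart η i : ℚ) ^ 2)
            - (oddCount η : ℚ))
        - (n : ℚ) - 2 * ((n : ℚ) - 1) = 0 ↔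
      Multiset.card η.parts = 2) := by
  change 0 ≤ soEvenDefect n η ∧ (soEvenDefect n η = 0 ↔ Multiset.card η.parts = 2)
  have hs : 1 ≤ η.parts.sup := one_le_sup_parts η (by omega)
  by_cases htwo : Multiset.card η.parts = 2
  · have hzero := soEvenDefect_eq_zero_of_card_eq_two η hs htwo
    simp [hzero, htwo]
  · have hpos := soEvenDefect_pos_of_four_le_card η hs (four_le_card_parts η hs horth htwo)
    exact ⟨hpos.le, by simp [hpos.ne', htwo]⟩
end
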